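/- arXiv:1801.09299 — 5 statements merged into one kernel-verified Lean document; each statement's English description precedes it below -/
import Mathlib

section
/- Let A be a positive semidefinite r×r real matrix, and let R₁,…,R_q be a partition of {1,…,r}. Define the q×q matrix B by B_{kl} = (|R_k||R_l|)^{-1/2} · Σ_{i∈R_k, j∈R_l} A_{ij}. Then the maximum eigenvalue of B is less than or equal to the maximum eigenvalue of A. -/
/-!
The matrix `B` is the compression `Pᵀ A P` of `A` by the matrix `P` whose columns
`𝟙_{R_k} / √|R_k|` are orthonormal. An eigenvector `v` of `B` for `μB` lifts to `w = P v` with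
`‖w‖ = ‖v‖` and `wᵀ A w = vᵀ B v = μB ‖v‖²`, while `wᵀ A w ≤ μA ‖w‖²` because `μA • 1 - A` is
positive semidefinite.
-/

open Matrix Function

namespace Matrix

variable {m n : Type*} [Fintype m] [Fintype n]

theorem exists_mulVec_eq_smul_of_mem_spectrum [DecidableEq n] {K : Type*} [Field K]
    {A : Matrix n n K} {μ : K} (h : μ ∈ spectrum K A) : ∃ v ≠ 0, A *ᵥ v = μ • v := by
  rw [← spectrum_toLin', ← Module.End.hasEigenvalue_iff_mem_spectrum] at h
  obtain ⟨v, hv⟩ := h.exists_hasEigenvector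
  exact ⟨v, hv.2, by simpa using hv.apply_eq_smul⟩

theorem IsHermitian.dotProduct_mulVec_le_of_mem_upperBounds_spectrum [DecidableEq n]
    {A : Matrix n n ℝ} (hA : A.IsHermitian) {μ : ℝ} (hμ : μ ∈ upperBounds (spectrum ℝ A))
    (x : n → ℝ) : x ⬝ᵥ A *ᵥ x ≤ μ * (x ⬝ᵥ x) := by
  open scoped MatrixOrder in
  have hle : (μ • 1 - A).PosSemidef := by
    simpa [Matrix.le_iff, Algebra.algebraMap_eq_smul_one] using
      le_algebraMap_of_spectrum_le (a := A) hμ hA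
  have := hle.dotProduct_mulVec_nonneg x
  simpa only [star_trivial, sub_mulVec, smul_mulVec, one_mulVec, dotProduct_sub,
    dotProduct_smul, smul_eq_mul, sub_nonneg] using this

theorem dotProduct_transpose_mul_mul_mulVec {R : Type*} [CommSemiring R] (A : Matrix m m R)
    (P : Matrix m n R) (u w : n → R) :
    u ⬝ᵥ (Pᵀ * A * P) *ᵥ w = P *ᵥ u ⬝ᵥ A *ᵥ (P *ᵥ w) := by
  rw [← mulVec_mulVec, ← mulVec_mulVec, dotProduct_transpose_mulVec, dotProduct_comm]

theorem upperBounds_spectrum_subset_transpose_mul_mul [DecidableEq m] [DecidableEq n]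
    {A : Matrix m m ℝ} (hA : A.IsHermitian) {P : Matrix m n ℝ} (hP : Pᵀ * P = 1) :
    upperBounds (spectrum ℝ A) ⊆ upperBounds (spectrum ℝ (Pᵀ * A * P)) := by
  intro μ hμ ν hν
  obtain ⟨v, hv0, hv⟩ := exists_mulVec_eq_smul_of_mem_spectrum hν
  have hnorm : P *ᵥ v ⬝ᵥ P *ᵥ v = v ⬝ᵥ v := by
    simpa [hP] using (dotProduct_transpose_mul_mul_mulVec 1 P v v).symm
  have hpos : 0 < v ⬝ᵥ v := by simpa using dotProduct_star_self_pos_iff.mpr hv0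
  have hrayleigh := hA.dotProduct_mulVec_le_of_mem_upperBounds_spectrum hμ (P *ᵥ v)
  rw [← dotProduct_transpose_mul_mul_mulVec, hv, hnorm, dotProduct_smul, smul_eq_mul]
    at hrayleigh
  exact le_of_mul_le_mul_right hrayleigh hpos

end Matrix

noncomputable def normalizedBlockIndicator {ι κ : Type*} [DecidableEq ι] (R : κ → Finset ι) :
    Matrix ι κ ℝ :=
  of fun i k ↦ if i ∈ R k then (√((R k).card : ℝ))⁻¹ else 0

section

variable {ι κ : Type*} [Fintype ι] [DecidableEq ι] (R : κ → Finset ι)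

theorem transpose_mul_mul_normalizedBlockIndicator_apply (A : Matrix ι ι ℝ) (k l : κ) :
    ((normalizedBlockIndicator R)ᵀ * A * normalizedBlockIndicator R) k l =
      (√(((R k).card : ℝ) * (R l).card))⁻¹ * ∑ i ∈ R k, ∑ j ∈ R l, A i j := by
  simp only [normalizedBlockIndicator, mul_apply, transpose_apply, of_apply, ite_mul, zero_mul,
    mul_ite, mul_zero, Finset.sum_ite_mem, Finset.univ_inter]
  simp only [Real.sqrt_mul (Nat.cast_nonneg _), mul_inv, Finset.sum_mul, Finset.mul_sum]
  rw [Finset.sum_comm]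
  exact Finset.sum_congr rfl fun _ _ ↦ Finset.sum_congr rfl fun _ _ ↦ by ring

theorem normalizedBlockIndicator_transpose_mul_self [DecidableEq κ] (hne : ∀ k, (R k).Nonempty)
    (hdisj : Pairwise (Disjoint on R)) :
    (normalizedBlockIndicator R)ᵀ * normalizedBlockIndicator R = 1 := by
  ext k l
  simp only [normalizedBlockIndicator, mul_apply, transpose_apply, of_apply, ite_mul, zero_mul,
    mul_ite, mul_zero, Finset.sum_ite_mem, Finset.univ_inter]
  rcases eq_or_ne k l with rfl | hkl
  · have hcard : ((R k).card : ℝ) ≠ 0 := by exact_mod_cast (hne k).card_ne_zero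
    rw [Finset.inter_self, Finset.sum_const, nsmul_eq_mul, ← mul_inv,
      Real.mul_self_sqrt (Nat.cast_nonneg _), mul_inv_cancel₀ hcard, one_apply_eq]
  · rw [Finset.disjoint_iff_inter_eq_empty.mp (hdisj hkl.symm), Finset.sum_empty,
      one_apply_ne hkl]

end

theorem maxEig_normalized_block_sums_le_general {r q : ℕ}
    (A : Matrix (Fin r) (Fin r) ℝ) (hA : A.PosSemidef)
    (R : Fin q → Finset (Fin r))
    (hne : ∀ k, (R k).Nonempty)
    (hdisj : ∀ k l, k ≠ l → Disjoint (R k) (R l))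
    (B : Matrix (Fin q) (Fin q) ℝ)
    (hB : ∀ k l, B k l =
      (Real.sqrt (((R k).card : ℝ) * ((R l).card : ℝ)))⁻¹ *
        ∑ i ∈ R k, ∑ j ∈ R l, A i j)
    (μA μB : ℝ)
    (hμA : IsGreatest (spectrum ℝ A) μA)
    (hμB : IsGreatest (spectrum ℝ B) μB) :
    μB ≤ μA := by
  have hBP : B = (normalizedBlockIndicator R)ᵀ * A * normalizedBlockIndicator R := by
    ext k l
    rw [hB, transpose_mul_mul_normalizedBlockIndicator_apply]
  have hP := normalizedBlockIndicator_transpose_mul_self R hne fun k l ↦ hdisj k l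
  exact upperBounds_spectrum_subset_transpose_mul_mul hA.isHermitian hP hμA.2 (hBP ▸ hμB.1)

/-- Amit's lemma: if A is positive semidefinite and B is the matrix of normalised
block sums of A over a partition R₁,…,R_q of the index set, then the maximum
eigenvalue of B is at most the maximum eigenvalue of A. -/
theorem maxEig_normalized_block_sums_le {r q : ℕ}
    (A : Matrix (Fin r) (Fin r) ℝ) (hA : A.PosSemidef)
    (R : Fin q → Finset (Fin r))
    (hne : ∀ k, (R k).Nonempty)
    (hdisj : ∀ k l, k ≠ l → Disjoint (R k) (R l))
    (hcover : ∀ i : Fin r, ∃ k, i ∈ R k)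
    (B : Matrix (Fin q) (Fin q) ℝ)
    (hB : ∀ k l, B k l =
      (Real.sqrt (((R k).card : ℝ) * ((R l).card : ℝ)))⁻¹ *
        ∑ i ∈ R k, ∑ j ∈ R l, A i j)
    (μA μB : ℝ)
    (hμA : IsGreatest (spectrum ℝ A) μA)
    (hμB : IsGreatest (spectrum ℝ B) μB) :
    μB ≤ μA :=
  maxEig_normalized_block_sums_le_general A hA R hne hdisj B hB μA μB hμA hμB
end

section
/- Consider the 2k-dimensional precision matrix Q that is block diagonal with 2×2 blocks Q_{ii} = [[1, ρᵢ],[ρᵢ, 1]], 0 ≤ ρᵢ < 1. With αᵢ = (∏_{l≠i}(1−ρ_l)) / (Σ_l ∏_{j≠l}(1−ρ_j)), the selection probabilities p with p_{2i−1} = p_{2i} = αᵢ/2 maximize λ_min(D_p Q) over the open probability simplex, where D_p = diag(p₁ Q₁₁⁻¹, …, p_{2k} Q_{2k,2k}⁻¹) is formed from the diagonal entries of Q; the maximal value equals ∏ₗ(1−ρ_l) / (2 Σ_l ∏_{j≠l}(1−ρ_j)). -/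
open Matrix Finset

/-- The block-diagonal precision matrix with 2×2 blocks [[1, ρᵢ],[ρᵢ, 1]],
indexed by Fin k × Fin 2. -/
def blockQ {k : ℕ} (ρ : Fin k → ℝ) :
    Matrix (Fin k × Fin 2) (Fin k × Fin 2) ℝ :=
  fun a b => if a.1 = b.1 then (if a.2 = b.2 then 1 else ρ a.1) else 0

lemma algmap_mulVec {n : Type*} [Fintype n] [DecidableEq n] (μ : ℝ) (v : n → ℝ) :
    (algebraMap ℝ (Matrix n n ℝ)) μ *ᵥ v = μ • v := by
  rw [Matrix.algebraMap_eq_diagonal]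
  ext i
  simp [Matrix.mulVec_diagonal, Pi.algebraMap_apply]

lemma mem_spectrum_iff_eigen {n : Type*} [Fintype n] [DecidableEq n]
    (M : Matrix n n ℝ) (μ : ℝ) :
    μ ∈ spectrum ℝ M ↔ ∃ v, v ≠ 0 ∧ M *ᵥ v = μ • v := by
  rw [spectrum.mem_iff, Matrix.isUnit_iff_isUnit_det, isUnit_iff_ne_zero, not_not,
      ← Matrix.exists_mulVec_eq_zero_iff]
  constructor
  · rintro ⟨v, hv, h⟩
    rw [Matrix.sub_mulVec, algmap_mulVec, sub_eq_zero] at h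
    exact ⟨v, hv, h.symm⟩
  · rintro ⟨v, hv, h⟩
    refine ⟨v, hv, ?_⟩
    rw [Matrix.sub_mulVec, algmap_mulVec, sub_eq_zero, h]

lemma mulVec_diag_blockQ {k : ℕ} (ρ : Fin k → ℝ) (p v : Fin k × Fin 2 → ℝ)
    (a : Fin k × Fin 2) :
    ((Matrix.diagonal p * blockQ ρ) *ᵥ v) a
      = p a * (v (a.1, a.2) + ρ a.1 * v (a.1, if a.2 = 0 then 1 else 0)) := by
  obtain ⟨i, t⟩ := a
  simp only [Matrix.mulVec, dotProduct, Fintype.sum_prod_type,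
    Matrix.diagonal_mul, blockQ]
  rw [Finset.sum_eq_single i]
  · fin_cases t <;> simp [Fin.sum_univ_two] <;> ring
  · intro j _ hj
    simp [hj.symm]
  · simp

/-- Optimality of the pseudo-optimal weights for the 2×2-block precision matrix:
the weights p_{2i−1} = p_{2i} = αᵢ/2 maximize λ_min(D_p Q) over the open
probability simplex, with maximal value ∏ₗ(1−ρₗ) / (2 Σₗ ∏_{j≠l}(1−ρⱼ)). -/
theorem pseudoOptimal_block_2x2 {k : ℕ} (hk : 0 < k)
    (ρ : Fin k → ℝ) (hρ0 : ∀ i, 0 ≤ ρ i) (hρ1 : ∀ i, ρ i < 1) :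
    let α : Fin k → ℝ := fun i =>
      (∏ l ∈ univ.erase i, (1 - ρ l)) / (∑ l, ∏ j ∈ univ.erase l, (1 - ρ j))
    let popt : Fin k × Fin 2 → ℝ := fun a => α a.1 / 2
    let val : ℝ :=
      (∏ l, (1 - ρ l)) / (2 * ∑ l, ∏ j ∈ univ.erase l, (1 - ρ j))
    IsGreatest {r : ℝ | ∃ p : Fin k × Fin 2 → ℝ,
        (∀ a, 0 < p a) ∧ (∑ a, p a = 1) ∧
        IsLeast (spectrum ℝ (Matrix.diagonal p * blockQ ρ)) r} val ∧
    (∀ a, 0 < popt a) ∧ (∑ a, popt a = 1) ∧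
    IsLeast (spectrum ℝ (Matrix.diagonal popt * blockQ ρ)) val := by
  intro α popt val
  have hne : Nonempty (Fin k) := ⟨⟨0, hk⟩⟩
  have h1ρ : ∀ i, 0 < 1 - ρ i := fun i => by linarith [hρ1 i]
  have hP : ∀ i : Fin k, 0 < ∏ j ∈ univ.erase i, (1 - ρ j) := fun i =>
    Finset.prod_pos (fun j _ => h1ρ j)
  have hS : 0 < ∑ l, ∏ j ∈ univ.erase l, (1 - ρ j) :=
    Finset.sum_pos (fun l _ => hP l) Finset.univ_nonempty
  have hprod : 0 < ∏ l, (1 - ρ l) := Finset.prod_pos (fun j _ => h1ρ j)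
  have hα : ∀ i, α i = (∏ j ∈ univ.erase i, (1 - ρ j)) /
      (∑ l, ∏ j ∈ univ.erase l, (1 - ρ j)) := fun _ => rfl
  have hαpos : ∀ i, 0 < α i := fun i => div_pos (hP i) hS
  have hvaldef : val = (∏ l, (1 - ρ l)) /
      (2 * ∑ l, ∏ j ∈ univ.erase l, (1 - ρ j)) := rfl
  have hvalpos : 0 < val := by
    rw [hvaldef]; exact div_pos hprod (by linarith)
  have hαval : ∀ i, α i * (1 - ρ i) = 2 * val := by
    intro i
    have h : (1 - ρ i) * ∏ j ∈ univ.erase i, (1 - ρ j) = ∏ l, (1 - ρ l) :=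
      Finset.mul_prod_erase univ (fun l => 1 - ρ l) (Finset.mem_univ i)
    rw [hα i, hvaldef]
    field_simp
    linear_combination h
  have hαsum : ∑ i, α i = 1 := by
    simp only [hα]
    rw [← Finset.sum_div, div_self hS.ne']
  have hpopt : ∀ a : Fin k × Fin 2, popt a = α a.1 / 2 := fun _ => rfl
  have hpoptpos : ∀ a, 0 < popt a := fun a => by
    rw [hpopt]; exact half_pos (hαpos a.1)
  have hpoptsum : ∑ a, popt a = 1 := by
    simp only [hpopt]
    rw [Fintype.sum_prod_type]
    simp only [Fin.sum_univ_two]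
    rw [← hαsum]
    exact Finset.sum_congr rfl (fun i _ => by ring)
  -- the optimal matrix attains val as least element of the spectrum
  have hleast_popt : IsLeast (spectrum ℝ (Matrix.diagonal popt * blockQ ρ)) val := by
    constructor
    · -- membership: explicit eigenvector on the first block
      rw [mem_spectrum_iff_eigen]
      set i0 : Fin k := ⟨0, hk⟩ with hi0
      refine ⟨fun a => if a.1 = i0 then (if a.2 = 0 then (1:ℝ) else -1) else 0, ?_, ?_⟩
      · intro h
        have := congrFun h (i0, 0)
        simp at this
      · funext a
        rw [mulVec_diag_blockQ]
        obtain ⟨j, t⟩ := a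
        by_cases hj : j = i0
        · subst hj
          have hv := hαval i0
          fin_cases t <;> simp [hpopt] <;> linarith
        · simp [hj]
    · -- lower bound
      intro μ hμ
      rw [mem_spectrum_iff_eigen] at hμ
      obtain ⟨v, hv, hMv⟩ := hμ
      obtain ⟨a, ha⟩ := Function.ne_iff.mp hv
      simp only [Pi.zero_apply] at ha
      obtain ⟨i, t⟩ := a
      have h0 := congrFun hMv (i, 0)
      have h1 := congrFun hMv (i, 1)
      rw [mulVec_diag_blockQ] at h0 h1
      simp only [hpopt, Pi.smul_apply, smul_eq_mul] at h0 h1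
      norm_num at h0 h1
      -- h0 : α i / 2 * (v (i,0) + ρ i * v (i,1)) = μ * v (i,0)
      -- h1 : α i / 2 * (v (i,1) + ρ i * v (i,0)) = μ * v (i,1)
      have hαv := hαval i
      have hαρ : 0 ≤ α i * ρ i := mul_nonneg (hαpos i).le (hρ0 i)
      have hor : v (i, 0) ≠ 0 ∨ v (i, 1) ≠ 0 := by
        fin_cases t
        · exact Or.inl ha
        · exact Or.inr ha
      by_cases hxy : v (i, 0) = v (i, 1)
      · have hx : v (i, 0) ≠ 0 := by
          rcases hor with h | h
          · exact h
          · rw [hxy]; exact h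
        have hcancel : α i / 2 * (1 + ρ i) * v (i, 0) = μ * v (i, 0) := by
          rw [← hxy] at h0
          linear_combination h0
        have hμeq := mul_right_cancel₀ hx hcancel
        nlinarith [hμeq, hαv, hαρ]
      · have hd : v (i, 0) - v (i, 1) ≠ 0 := sub_ne_zero.mpr hxy
        have hcancel : α i / 2 * (1 - ρ i) * (v (i, 0) - v (i, 1))
            = μ * (v (i, 0) - v (i, 1)) := by
          linear_combination h0 - h1
        have hμeq := mul_right_cancel₀ hd hcancel
        nlinarith [hμeq, hαv]
  refine ⟨⟨⟨popt, hpoptpos, hpoptsum, hleast_popt⟩, ?_⟩, hpoptpos, hpoptsum, hleast_popt⟩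
  -- upper bound over the simplex
  rintro r ⟨p, hp, hpsum, hleast⟩
  have hssum : ∑ i, (p (i, 0) + p (i, 1)) = 1 := by
    rw [← hpsum, Fintype.sum_prod_type]
    exact Finset.sum_congr rfl (fun i _ => by simp [Fin.sum_univ_two])
  have hex : ∃ i, p (i, 0) + p (i, 1) ≤ α i := by
    by_contra hcon
    push_neg at hcon
    have : (1:ℝ) < 1 := by
      calc (1:ℝ) = ∑ i, α i := hαsum.symm
        _ < ∑ i, (p (i, 0) + p (i, 1)) :=
          Finset.sum_lt_sum_of_nonempty Finset.univ_nonempty (fun i _ => hcon i)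
        _ = 1 := hssum
    exact absurd this (lt_irrefl 1)
  obtain ⟨i, hi⟩ := hex
  have hpa := hp (i, 0)
  have hpb := hp (i, 1)
  set pa := p (i, 0) with hpa_def
  set pb := p (i, 1) with hpb_def
  -- find an element μ of the spectrum with μ ≤ val
  have key : ∃ μ ∈ spectrum ℝ (Matrix.diagonal p * blockQ ρ), μ ≤ val := by
    by_cases hρi : ρ i = 0
    · -- diagonal block: pa and pb are eigenvalues
      have hediag : ∀ t : Fin 2, p (i, t) ∈ spectrum ℝ (Matrix.diagonal p * blockQ ρ) := by
        intro t
        rw [mem_spectrum_iff_eigen]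
        refine ⟨fun c => if c = (i, t) then 1 else 0, ?_, ?_⟩
        · intro h
          have := congrFun h (i, t)
          simp at this
        · funext c
          rw [mulVec_diag_blockQ]
          obtain ⟨j, s⟩ := c
          by_cases hj : j = i
          · subst hj
            fin_cases s <;> fin_cases t <;>
              simp [Prod.ext_iff, hρi]
          · simp [Prod.ext_iff, hj]
      have hval2 : α i = 2 * val := by
        have := hαval i; rw [hρi] at this; linarith
      rcases le_total pa pb with hab | hab
      · exact ⟨pa, hediag 0, by linarith⟩
      · exact ⟨pb, hediag 1, by linarith⟩
    · have hρpos : 0 < ρ i := lt_of_le_of_ne (hρ0 i) (Ne.symm hρi)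
      set D : ℝ := Real.sqrt ((pa - pb)^2 + 4*pa*pb*(ρ i)^2) with hDdef
      have hD0 : 0 ≤ D := Real.sqrt_nonneg _
      have hD2 : D^2 = (pa - pb)^2 + 4*pa*pb*(ρ i)^2 :=
        Real.sq_sqrt (by positivity)
      have hDge : (pa + pb) * ρ i ≤ D := by
        have hc0 : 0 ≤ (pa + pb) * ρ i := by positivity
        have hsq : 0 ≤ 1 - (ρ i)^2 := by nlinarith [hρ0 i, hρ1 i]
        have h2 : ((pa + pb) * ρ i)^2 ≤ (pa - pb)^2 + 4*pa*pb*(ρ i)^2 := by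
          nlinarith [mul_nonneg (sq_nonneg (pa - pb)) hsq]
        calc (pa + pb) * ρ i = Real.sqrt (((pa + pb) * ρ i)^2) :=
              (Real.sqrt_sq hc0).symm
          _ ≤ D := Real.sqrt_le_sqrt h2
      set μ : ℝ := (pa + pb - D)/2 with hμdef
      have hquad : μ^2 - (pa + pb)*μ + pa*pb*(1 - (ρ i)^2) = 0 := by
        rw [hμdef]; linear_combination hD2/4
      have hμle : μ ≤ val := by
        have h1 : μ ≤ (pa + pb) * (1 - ρ i) / 2 := by
          rw [hμdef]; nlinarith [hDge]
        have h2 : (pa + pb) * (1 - ρ i) ≤ α i * (1 - ρ i) :=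
          mul_le_mul_of_nonneg_right hi (by linarith [h1ρ i])
        have h3 := hαval i
        linarith
      refine ⟨μ, ?_, hμle⟩
      rw [mem_spectrum_iff_eigen]
      refine ⟨fun c => if c.1 = i then (if c.2 = 0 then pa * ρ i else μ - pa) else 0, ?_, ?_⟩
      · intro h
        have h0 : pa * ρ i = 0 := by simpa using congrFun h (i, 0)
        exact (mul_pos hpa hρpos).ne' h0
      · funext c
        rw [mulVec_diag_blockQ]
        obtain ⟨j, t⟩ := c
        by_cases hj : j = i
        · subst hj
          fin_cases t
          · simp only [Pi.smul_apply, smul_eq_mul]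
            norm_num
            ring
          · simp only [Pi.smul_apply, smul_eq_mul]
            norm_num
            linear_combination (-1 : ℝ) * hquad
        · simp [hj]
  obtain ⟨μ, hμmem, hμle⟩ := key
  exact le_trans (hleast.2 hμmem) hμle
end

section
/- The projection of a point v ∈ ℝ^s onto the standard simplex {u : uᵢ ≥ 0, Σuᵢ = 1} is given by uᵢ = max(vᵢ + λ, 0), where λ = (1 − Σ_{k=1}^ρ v_{(k)})/ρ, v_{(1)} ≥ … ≥ v_{(s)} is the decreasing rearrangement of v, and ρ = max{1 ≤ j ≤ s : v_{(j)} + (1 − Σ_{k=1}^j v_{(k)})/j > 0}. -/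
/-!
Write `λⱼ = (1 - S(j+1)) / (j+1)` for the threshold at the sorted index `j`, and
`u = max (v + λ_ρ) 0`.  Coordinatewise, `max (a + λ) 0` minimizes `(a - z)² - 2λz` over `z ≥ 0`;
summing, `u` minimizes `‖v - z‖² - 2λ ∑ z` over the nonnegative orthant, hence minimizes
`‖v - z‖²` on the slice `∑ z = ∑ u`.  It remains to see `∑ u = 1`, i.e. that the support of `u`
is exactly the first `ρ + 1` sorted coordinates.  Up to `ρ` this is sortedness and `0 < v(σρ) + λ_ρ`.
Beyond `ρ`, the identity `(j+2)(v_{j+1} + λ_{j+1}) = (j+1)(v_{j+1} + λⱼ)` and maximality of `ρ`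
give `v(σ(ρ+1)) + λ_ρ ≤ 0`, and sortedness propagates this to all later indices.
Then `∑ u = S(ρ+1) + (ρ+1)λ_ρ = 1`.
-/

open Finset

/-- Partial sums of the decreasing rearrangement: S(j) = Σ_{k < j} v(σ k). -/
def sortedPartialSum {s : ℕ} (v : Fin s → ℝ) (σ : Equiv.Perm (Fin s))
    (j : ℕ) : ℝ :=
  ∑ k : Fin s, if (k : ℕ) < j then v (σ k) else 0

theorem sq_sub_max_add_zero_le (a lam z : ℝ) (hz : 0 ≤ z) :
    (a - max (a + lam) 0) ^ 2 - 2 * lam * max (a + lam) 0 ≤ (a - z) ^ 2 - 2 * lam * z := by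
  rcases le_total 0 (a + lam) with h | h
  · rw [max_eq_left h]; nlinarith [sq_nonneg (z - (a + lam))]
  · rw [max_eq_right h]; nlinarith

theorem sum_sq_sub_max_add_le {ι : Type*} [Fintype ι] (v z : ι → ℝ) (lam : ℝ)
    (hz : ∀ i, 0 ≤ z i) (hsum : ∑ i, z i = ∑ i, max (v i + lam) 0) :
    ∑ i, (v i - max (v i + lam) 0) ^ 2 ≤ ∑ i, (v i - z i) ^ 2 := by
  have key := sum_le_sum fun i (_ : i ∈ univ) => sq_sub_max_add_zero_le (v i) lam (z i) (hz i)
  simp only [sum_sub_distrib, ← mul_sum, hsum] at key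
  linarith

section Sorted

variable {s : ℕ} (v : Fin s → ℝ) (σ : Equiv.Perm (Fin s))

noncomputable def sortedThreshold (j : ℕ) : ℝ :=
  (1 - sortedPartialSum v σ (j + 1)) / (j + 1)

theorem sortedPartialSum_eq_sum_Iio (j : Fin s) :
    sortedPartialSum v σ j = ∑ k ∈ Iio j, v (σ k) := by
  rw [sortedPartialSum, ← sum_filter]
  congr 1
  ext k
  simp only [mem_filter, mem_univ, true_and, mem_Iio, Fin.lt_def]

theorem sortedPartialSum_succ_eq_sum_Iic (j : Fin s) :
    sortedPartialSum v σ (j + 1) = ∑ k ∈ Iic j, v (σ k) := by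
  rw [sortedPartialSum, ← sum_filter]
  congr 1
  ext k
  simp only [mem_filter, mem_univ, true_and, mem_Iic, Fin.le_def, Nat.lt_succ_iff]

theorem sortedPartialSum_succ (j : Fin s) :
    sortedPartialSum v σ (j + 1) = sortedPartialSum v σ j + v (σ j) := by
  rw [sortedPartialSum_succ_eq_sum_Iic, sortedPartialSum_eq_sum_Iio, Iic_eq_cons_Iio, sum_cons,
    add_comm]

theorem mul_add_sortedThreshold_succ {i j : Fin s} (hij : (j : ℕ) = i + 1) :
    ((j : ℝ) + 1) * (v (σ j) + sortedThreshold v σ j)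
      = ((i : ℝ) + 1) * (v (σ j) + sortedThreshold v σ i) := by
  have hS : sortedPartialSum v σ (j + 1) = sortedPartialSum v σ (i + 1) + v (σ j) := by
    rw [sortedPartialSum_succ, hij]
  have hj : (j : ℝ) = i + 1 := by exact_mod_cast hij
  unfold sortedThreshold
  rw [hS, hj]
  field_simp
  ring

variable {v σ}

theorem add_sortedThreshold_nonpos_of_lt (hσ : ∀ i j : Fin s, i ≤ j → v (σ j) ≤ v (σ i))
    {ρ : Fin s} (hρ : IsGreatest {j : Fin s | 0 < v (σ j) + sortedThreshold v σ j} ρ)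
    {k : Fin s} (hk : ρ < k) :
    v (σ k) + sortedThreshold v σ ρ ≤ 0 := by
  set ρ' : Fin s := ⟨ρ + 1, by omega⟩
  have hρρ' : ρ < ρ' := Fin.lt_def.mpr (by simp [ρ'])
  have hρ'k : ρ' ≤ k := Fin.le_def.mpr (by simp [ρ']; omega)
  have hρ' : v (σ ρ') + sortedThreshold v σ ρ' ≤ 0 :=
    not_lt.mp fun h => (hρ.2 h).not_gt hρρ'
  have hρ'_nonpos : v (σ ρ') + sortedThreshold v σ ρ ≤ 0 := by
    have h := mul_nonpos_of_nonneg_of_nonpos (by positivity : (0 : ℝ) ≤ (ρ' : ℝ) + 1) hρ'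
    rw [mul_add_sortedThreshold_succ v σ (i := ρ) rfl] at h
    exact nonpos_of_mul_nonpos_right h (by positivity)
  linarith [hσ ρ' k hρ'k]

theorem sum_max_add_sortedThreshold (hσ : ∀ i j : Fin s, i ≤ j → v (σ j) ≤ v (σ i))
    {ρ : Fin s} (hρ : IsGreatest {j : Fin s | 0 < v (σ j) + sortedThreshold v σ j} ρ) :
    ∑ i, max (v i + sortedThreshold v σ ρ) 0 = 1 := by
  have hsupp : ∀ k : Fin s,
      max (v (σ k) + sortedThreshold v σ ρ) 0
        = if k ≤ ρ then v (σ k) + sortedThreshold v σ ρ else 0 := by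
    intro k
    split_ifs with hk
    · exact max_eq_left (by linarith [hσ k ρ hk, hρ.1.out])
    · exact max_eq_right (add_sortedThreshold_nonpos_of_lt hσ hρ (not_le.mp hk))
  have hcard : ((#(Iic ρ) : ℕ) : ℝ) = (ρ : ℝ) + 1 := by simp [Fin.card_Iic]
  rw [← Equiv.sum_comp σ, sum_congr rfl fun k _ => hsupp k, ← sum_filter,
    filter_ge_eq_Iic, sum_add_distrib, ← sortedPartialSum_succ_eq_sum_Iic, sum_const,
    nsmul_eq_mul, hcard, sortedThreshold]
  field_simp
  ring

end Sorted

theorem simplex_projection_formula_general {s : ℕ}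
    (v : Fin s → ℝ) (σ : Equiv.Perm (Fin s))
    (hσ : ∀ i j : Fin s, i ≤ j → v (σ j) ≤ v (σ i))
    (ρ : Fin s)
    (hρ : IsGreatest {j : Fin s |
      0 < v (σ j) + (1 - sortedPartialSum v σ ((j : ℕ) + 1)) / ((j : ℕ) + 1)} ρ) :
    let lam : ℝ := (1 - sortedPartialSum v σ ((ρ : ℕ) + 1)) / ((ρ : ℕ) + 1)
    let u : Fin s → ℝ := fun i => max (v i + lam) 0
    (∀ i, 0 ≤ u i) ∧ (∑ i, u i = 1) ∧
      ∀ z : Fin s → ℝ, (∀ i, 0 ≤ z i) → (∑ i, z i = 1) →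
        ∑ i, (v i - u i) ^ 2 ≤ ∑ i, (v i - z i) ^ 2 := by
  have hsum := sum_max_add_sortedThreshold hσ hρ
  refine ⟨fun i => le_max_right _ _, hsum, fun z hz hz1 => ?_⟩
  exact sum_sq_sub_max_add_le v z _ hz (hz1.trans hsum.symm)

/-- Correctness of the sorting algorithm for Euclidean projection onto the
standard probability simplex: if σ sorts v into decreasing order, ρ is the
largest index j with v_{(j)} + (1 − Σ_{k≤j} v_{(k)})/j > 0, and
λ = (1 − Σ_{k≤ρ} v_{(k)})/ρ, then u with uᵢ = max(vᵢ + λ, 0) is the Euclidean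
projection of v onto the simplex. -/
theorem simplex_projection_formula {s : ℕ} (hs : 0 < s)
    (v : Fin s → ℝ) (σ : Equiv.Perm (Fin s))
    (hσ : ∀ i j : Fin s, i ≤ j → v (σ j) ≤ v (σ i))
    (ρ : Fin s)
    (hρ : IsGreatest {j : Fin s |
      0 < v (σ j) + (1 - sortedPartialSum v σ ((j : ℕ) + 1)) / ((j : ℕ) + 1)} ρ) :
    let lam : ℝ := (1 - sortedPartialSum v σ ((ρ : ℕ) + 1)) / ((ρ : ℕ) + 1)
    let u : Fin s → ℝ := fun i => max (v i + lam) 0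
    (∀ i, 0 ≤ u i) ∧ (∑ i, u i = 1) ∧
      ∀ z : Fin s → ℝ, (∀ i, 0 ≤ z i) → (∑ i, z i = 1) →
        ∑ i, (v i - u i) ^ 2 ≤ ∑ i, (v i - z i) ^ 2 :=
  simplex_projection_formula_general v σ hσ ρ hρ
end

section
/- For a reversible Markov kernel P with stationary distribution π and L₂(π)-spectral gap Gap(P) > 0, the asymptotic variance of any f ∈ L₂(π) satisfies σ²_as(f) ≤ ((2 − Gap(P))/Gap(P)) · Var_π(f), where σ²_as(f) = ⟨(I+P)(I−P)⁻¹ f̄, f̄⟩ with f̄ = f − π(f). -/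
open scoped RealInnerProductSpace

/-- Generalized Cauchy–Schwarz for a nonnegative symmetric bilinear form. -/
private lemma form_cauchy_schwarz {H : Type*} [NormedAddCommGroup H]
    [InnerProductSpace ℝ H] (B : H →L[ℝ] H)
    (hsym : ∀ x y : H, ⟪B x, y⟫ = ⟪x, B y⟫)
    (hpos : ∀ x : H, 0 ≤ ⟪B x, x⟫) (x y : H) :
    ⟪B x, y⟫ ^ 2 ≤ ⟪B x, x⟫ * ⟪B y, y⟫ := by
  have key : ∀ t : ℝ, 0 ≤ ⟪B y, y⟫ * (t * t) + (2 * ⟪B x, y⟫) * t + ⟪B x, x⟫ := by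
    intro t
    have h := hpos (x + t • y)
    have hyx : ⟪B y, x⟫ = ⟪B x, y⟫ := by
      rw [hsym y x, real_inner_comm]
    have expand : ⟪B (x + t • y), x + t • y⟫ =
        ⟪B y, y⟫ * (t * t) + (2 * ⟪B x, y⟫) * t + ⟪B x, x⟫ := by
      simp only [map_add, map_smul, inner_add_left, inner_add_right,
        real_inner_smul_left, real_inner_smul_right, hyx]
      ring
    linarith [expand ▸ h]
  have hd := discrim_le_zero key
  rw [discrim] at hd
  nlinarith [hd]

set_option maxHeartbeats 1600000 in
/-- A self-adjoint operator on a real Hilbert space whose real spectrum is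
nonnegative has a nonnegative quadratic form. -/
private lemma inner_nonneg_of_spectrum_nonneg {H : Type*} [NormedAddCommGroup H]
    [InnerProductSpace ℝ H] [CompleteSpace H] (Q : H →L[ℝ] H)
    (hQ : IsSelfAdjoint Q) (hs : spectrum ℝ Q ⊆ Set.Ici 0) (x : H) :
    0 ≤ ⟪Q x, x⟫ := by
  by_contra hneg
  push_neg at hneg
  have hx0 : x ≠ 0 := by
    rintro rfl
    simp at hneg
  have hxn : (0 : ℝ) < ‖x‖ := norm_pos_iff.mpr hx0
  set y₀ : H := ‖x‖⁻¹ • x with hy₀def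
  have hy₀ : ‖y₀‖ = 1 := by
    rw [hy₀def, norm_smul, norm_inv, norm_norm, inv_mul_cancel₀ hxn.ne']
  have hQy₀ : ⟪Q y₀, y₀⟫ = ‖x‖⁻¹ * (‖x‖⁻¹ * ⟪Q x, x⟫) := by
    rw [hy₀def, map_smul, real_inner_smul_left, real_inner_smul_right]
  have hQy₀neg : ⟪Q y₀, y₀⟫ < 0 := by
    rw [hQy₀]
    have h : (0 : ℝ) < ‖x‖⁻¹ := by positivity
    exact mul_neg_of_pos_of_neg h (mul_neg_of_pos_of_neg h hneg)
  -- the infimum of the quadratic form on the unit sphere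
  set S : Set ℝ := {r | ∃ y : H, ‖y‖ = 1 ∧ ⟪Q y, y⟫ = r} with hSdef
  have hSne : S.Nonempty := ⟨⟪Q y₀, y₀⟫, y₀, hy₀, rfl⟩
  have hSbdd : BddBelow S := by
    refine ⟨-‖Q‖, ?_⟩
    rintro r ⟨y, hy, rfl⟩
    have h1 : |⟪Q y, y⟫| ≤ ‖Q y‖ * ‖y‖ := abs_real_inner_le_norm _ _
    have h2 : ‖Q y‖ ≤ ‖Q‖ * ‖y‖ := Q.le_opNorm y
    rw [hy] at h1 h2
    simp only [mul_one] at h1 h2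
    have := abs_le.mp (h1.trans h2)
    linarith [this.1]
  set m : ℝ := sInf S with hmdef
  have hmle : m ≤ ⟪Q y₀, y₀⟫ := csInf_le hSbdd ⟨y₀, hy₀, rfl⟩
  have hmneg : m < 0 := lt_of_le_of_lt hmle hQy₀neg
  have hmnotspec : m ∉ spectrum ℝ Q := fun h => absurd (hs h) (not_le.mpr hmneg)
  have hunit : IsUnit (algebraMap ℝ (H →L[ℝ] H) m - Q) := spectrum.notMem_iff.mp hmnotspec
  set B : H →L[ℝ] H := Q - algebraMap ℝ (H →L[ℝ] H) m with hBdef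
  have hBunit : IsUnit B := by
    have : B = -(algebraMap ℝ (H →L[ℝ] H) m - Q) := by rw [hBdef, neg_sub]
    rw [this]
    exact hunit.neg
  have hBapp : ∀ z : H, B z = Q z - m • z := by
    intro z
    simp [hBdef, Algebra.algebraMap_eq_smul_one]
  have hsymB : ∀ z w : H, ⟪B z, w⟫ = ⟪z, B w⟫ := by
    intro z w
    have hq : ⟪Q z, w⟫ = ⟪z, Q w⟫ := hQ.isSymmetric z w
    rw [hBapp z, hBapp w, inner_sub_left, inner_sub_right, hq,
      real_inner_smul_left, real_inner_smul_right]
  -- the form of B is nonnegative, by definition of the infimum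
  have hposB : ∀ z : H, 0 ≤ ⟪B z, z⟫ := by
    intro z
    rcases eq_or_ne z 0 with rfl | hz
    · simp
    · have hzn : (0 : ℝ) < ‖z‖ := norm_pos_iff.mpr hz
      have hzu : ‖(‖z‖⁻¹ • z : H)‖ = 1 := by
        rw [norm_smul, norm_inv, norm_norm, inv_mul_cancel₀ hzn.ne']
      have hmem : ⟪Q (‖z‖⁻¹ • z), (‖z‖⁻¹ • z : H)⟫ ∈ S := ⟨_, hzu, rfl⟩
      have hge : m ≤ ⟪Q (‖z‖⁻¹ • z), (‖z‖⁻¹ • z : H)⟫ := csInf_le hSbdd hmem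
      have heq : ⟪Q (‖z‖⁻¹ • z), (‖z‖⁻¹ • z : H)⟫ = ‖z‖⁻¹ * (‖z‖⁻¹ * ⟪Q z, z⟫) := by
        rw [map_smul, real_inner_smul_left, real_inner_smul_right]
      rw [heq] at hge
      have hnormz : ⟪z, z⟫ = ‖z‖ ^ 2 := real_inner_self_eq_norm_sq z
      rw [hBapp z, inner_sub_left, real_inner_smul_left, hnormz]
      have h2 : m * ‖z‖ ^ 2 ≤ ⟪Q z, z⟫ := by
        have hinv : (0 : ℝ) < ‖z‖⁻¹ := by positivity
        have := mul_le_mul_of_nonneg_left hge (le_of_lt (mul_pos hzn hzn))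
        have hzz : ‖z‖ * ‖z‖ * (‖z‖⁻¹ * (‖z‖⁻¹ * ⟪Q z, z⟫)) = ⟪Q z, z⟫ := by
          field_simp
        nlinarith [this, hzz]
      linarith
  -- B is invertible, so bounded below
  obtain ⟨u, hu⟩ := hBunit
  set C : ℝ := ‖((↑u⁻¹ : H →L[ℝ] H))‖ with hCdef
  have hlow : ∀ z : H, ‖z‖ ≤ C * ‖B z‖ := by
    intro z
    have h1 : (↑u⁻¹ * ↑u : H →L[ℝ] H) = 1 := u.inv_mul
    have h2 : (↑u⁻¹ : H →L[ℝ] H) (B z) = z := by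
      rw [← hu, ← ContinuousLinearMap.mul_apply, h1, ContinuousLinearMap.one_apply]
    calc ‖z‖ = ‖(↑u⁻¹ : H →L[ℝ] H) (B z)‖ := by rw [h2]
    _ ≤ C * ‖B z‖ := (↑u⁻¹ : H →L[ℝ] H).le_opNorm _
  have hCy₀ : 1 ≤ C * ‖B y₀‖ := by
    have := hlow y₀
    rwa [hy₀] at this
  have hC0 : 0 < C := by
    rcases lt_or_eq_of_le (norm_nonneg ((↑u⁻¹ : H →L[ℝ] H))) with h | h
    · exact h
    · exfalso
      rw [hCdef, ← h, zero_mul] at hCy₀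
      linarith
  have hBy₀ : 0 < ‖B y₀‖ := by nlinarith
  have hBn : 0 < ‖B‖ := by
    have h1 : ‖B y₀‖ ≤ ‖B‖ * ‖y₀‖ := B.le_opNorm y₀
    rw [hy₀, mul_one] at h1
    linarith
  -- the key quantitative lower bound on the form of B on unit vectors
  set δ : ℝ := 1 / (C ^ 2 * ‖B‖) with hδdef
  have hCB : 0 < C ^ 2 * ‖B‖ := mul_pos (pow_pos hC0 2) hBn
  have hδ0 : 0 < δ := by rw [hδdef]; exact div_pos one_pos hCB
  have hform : ∀ y : H, ‖y‖ = 1 → δ ≤ ⟪B y, y⟫ := by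
    intro y hy
    have h1 : 1 ≤ C * ‖B y‖ := by
      have := hlow y; rwa [hy] at this
    have hBy : 0 < ‖B y‖ := by nlinarith [norm_nonneg (B y)]
    have hcs := form_cauchy_schwarz B hsymB hposB y (B y)
    have hBy2 : ⟪B y, B y⟫ = ‖B y‖ ^ 2 := real_inner_self_eq_norm_sq _
    rw [hBy2] at hcs
    have hpy : 0 ≤ ⟪B y, y⟫ := hposB y
    have ha : ⟪B (B y), B y⟫ ≤ ‖B (B y)‖ * ‖B y‖ := real_inner_le_norm _ _
    have hb : ‖B (B y)‖ ≤ ‖B‖ * ‖B y‖ := B.le_opNorm _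
    have hBBy : ⟪B (B y), B y⟫ ≤ ‖B‖ * ‖B y‖ ^ 2 := by
      have := mul_le_mul_of_nonneg_right hb hBy.le
      calc ⟪B (B y), B y⟫ ≤ ‖B (B y)‖ * ‖B y‖ := ha
        _ ≤ ‖B‖ * ‖B y‖ * ‖B y‖ := this
        _ = ‖B‖ * ‖B y‖ ^ 2 := by ring
    have h4 : (‖B y‖ ^ 2) ^ 2 ≤ ⟪B y, y⟫ * (‖B‖ * ‖B y‖ ^ 2) := by
      calc (‖B y‖ ^ 2) ^ 2 ≤ ⟪B y, y⟫ * ⟪B (B y), B y⟫ := hcs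
        _ ≤ ⟪B y, y⟫ * (‖B‖ * ‖B y‖ ^ 2) := mul_le_mul_of_nonneg_left hBBy hpy
    have h5 : ‖B y‖ ^ 2 ≤ ‖B‖ * ⟪B y, y⟫ := by
      have hsq : 0 < ‖B y‖ ^ 2 := pow_pos hBy 2
      refine le_of_mul_le_mul_right ?_ hsq
      nlinarith [h4]
    have h6 : 1 ≤ C ^ 2 * ‖B y‖ ^ 2 := by nlinarith [h1, hC0.le, hBy.le]
    rw [hδdef, div_le_iff₀ hCB]
    have h7 : C ^ 2 * ‖B y‖ ^ 2 ≤ C ^ 2 * (‖B‖ * ⟪B y, y⟫) :=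
      mul_le_mul_of_nonneg_left h5 (sq_nonneg C)
    calc (1:ℝ) ≤ C ^ 2 * ‖B y‖ ^ 2 := h6
      _ ≤ C ^ 2 * (‖B‖ * ⟪B y, y⟫) := h7
      _ = ⟪B y, y⟫ * (C ^ 2 * ‖B‖) := by ring
  -- contradiction with the infimum
  have hsInf : m + δ ≤ m := by
    rw [hmdef]
    apply le_csInf hSne
    rintro r ⟨y, hy, rfl⟩
    have h1 := hform y hy
    have h2 : ⟪B y, y⟫ = ⟪Q y, y⟫ - m := by
      rw [hBapp y, inner_sub_left, real_inner_smul_left,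
        real_inner_self_eq_norm_sq, hy]
      ring
    rw [h2] at h1
    linarith
  linarith

/-- Kipnis–Varadhan bound: let P be a self-adjoint Markov operator on the
centered L₂ space with spectrum contained in [−1, 1 − Gap] for Gap ∈ (0,1].
If (I − P) g = f, so that σ²_as(f) = ⟨(I + P) g, f⟩, then
σ²_as(f) ≤ ((2 − Gap)/Gap)·‖f‖². -/
theorem kipnis_varadhan_bound {H : Type*} [NormedAddCommGroup H]
    [InnerProductSpace ℝ H] [CompleteSpace H]
    (P : H →L[ℝ] H) (hP : IsSelfAdjoint P)
    (gap : ℝ) (hgap0 : 0 < gap) (hgap1 : gap ≤ 1)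
    (hspec : spectrum ℝ P ⊆ Set.Icc (-1) (1 - gap)) :
    ∀ f g : H, (1 - P) g = f →
      ⟪(1 + P) g, f⟫ ≤ ((2 - gap) / gap) * ‖f‖ ^ 2 := by
  intro f g hfg
  subst hfg
  -- positivity of (1-gap)•1 - P
  have hQsa : IsSelfAdjoint (algebraMap ℝ (H →L[ℝ] H) (1 - gap) - P) :=
    (IsSelfAdjoint.algebraMap _ (star_trivial _)).sub hP
  have hQspec : spectrum ℝ (algebraMap ℝ (H →L[ℝ] H) (1 - gap) - P) ⊆ Set.Ici 0 := by
    rw [← spectrum.singleton_sub_eq]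
    rintro z hz
    rw [Set.mem_sub] at hz
    obtain ⟨r, hr, s, hs, rfl⟩ := hz
    rw [Set.mem_singleton_iff] at hr
    subst hr
    have := (hspec hs).2
    simp only [Set.mem_Ici]
    linarith
  have hpos := inner_nonneg_of_spectrum_nonneg _ hQsa hQspec g
  have hposg : ⟪P g, g⟫ ≤ (1 - gap) * ⟪g, g⟫ := by
    have happ : (algebraMap ℝ (H →L[ℝ] H) (1 - gap) - P) g = (1 - gap) • g - P g := by
      simp [Algebra.algebraMap_eq_smul_one]
    rw [happ, inner_sub_left, real_inner_smul_left] at hpos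
    linarith
  have happ1 : (1 - P) g = g - P g := by
    simp [ContinuousLinearMap.sub_apply]
  have happ2 : (1 + P) g = g + P g := by
    simp [ContinuousLinearMap.add_apply]
  have hcomm : ⟪g, P g⟫ = ⟪P g, g⟫ := real_inner_comm (P g) g
  have hL : ⟪(1 + P) g, (1 - P) g⟫ = ⟪g, g⟫ - ⟪P g, P g⟫ := by
    rw [happ1, happ2, inner_add_left, inner_sub_right, inner_sub_right, hcomm]
    ring
  have hs2 : ‖(1 - P) g‖ ^ 2 = ⟪g, g⟫ - 2 * ⟪P g, g⟫ + ⟪P g, P g⟫ := by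
    rw [← real_inner_self_eq_norm_sq, happ1, inner_sub_left, inner_sub_right,
      inner_sub_right, hcomm]
    ring
  have hcs : (⟪g, g⟫ - ⟪P g, g⟫) * (⟪g, g⟫ - ⟪P g, g⟫) ≤
      (⟪g, g⟫ - 2 * ⟪P g, g⟫ + ⟪P g, P g⟫) * ⟪g, g⟫ := by
    have h := real_inner_mul_inner_self_le (g - P g) g
    have ht : ⟪g - P g, g⟫ = ⟪g, g⟫ - ⟪P g, g⟫ := by
      rw [inner_sub_left]
    have htt : ⟪g - P g, g - P g⟫ = ⟪g, g⟫ - 2 * ⟪P g, g⟫ + ⟪P g, P g⟫ := by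
      rw [inner_sub_left, inner_sub_right, inner_sub_right, hcomm]
      ring
    rw [ht, htt] at h
    exact h
  have ha0 : (0:ℝ) ≤ ⟪g, g⟫ := real_inner_self_nonneg
  have hs0 : (0:ℝ) ≤ ⟪g, g⟫ - 2 * ⟪P g, g⟫ + ⟪P g, P g⟫ := by
    rw [← hs2]; positivity
  have ht0 : (0:ℝ) ≤ ⟪g, g⟫ - ⟪P g, g⟫ := by nlinarith [hposg, ha0, hgap0]
  have hkey : gap * (⟪g, g⟫ - ⟪P g, g⟫) ≤ ⟪g, g⟫ - 2 * ⟪P g, g⟫ + ⟪P g, P g⟫ := by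
    rcases eq_or_lt_of_le ht0 with h | h
    · rw [← h, mul_zero]; exact hs0
    · have h1 : gap * ⟪g, g⟫ ≤ ⟪g, g⟫ - ⟪P g, g⟫ := by nlinarith [hposg]
      have h2 : gap * (⟪g, g⟫ - ⟪P g, g⟫) * (⟪g, g⟫ - ⟪P g, g⟫) ≤
          (⟪g, g⟫ - 2 * ⟪P g, g⟫ + ⟪P g, P g⟫) * (⟪g, g⟫ - ⟪P g, g⟫) := by
        nlinarith [hcs, h1, hs0, hgap0, ht0]
      exact le_of_mul_le_mul_right h2 h
  rw [hL, hs2, div_mul_eq_mul_div, le_div_iff₀ hgap0]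
  nlinarith [hkey, hgap0, hs0]
end

section
/- For the extended objective f(w) = min{ λ_min(√Q D_w √Q), 1 − w₁ − … − w_s } on the simplex Δ_s, if w* maximizes f over Δ_s and k* = Σᵢ wᵢ*, then the normalized vector p* with pᵢ* = wᵢ*/k* maximizes PG(p) = λ_min(√Q D_p √Q) over probability vectors, and PG(p*) = f(w*)/k*. The key homogeneity fact: PG(k·p) = k·PG(p) for any scalar k > 0. -/
open Matrix

/-- The minimum eigenvalue of a symmetric matrix. -/
noncomputable def lamMin {m : Type*} [Fintype m] [DecidableEq m]
    (M : Matrix m m ℝ) : ℝ := sInf (spectrum ℝ M)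

/-- The block-diagonal matrix D_w = diag(w₁ Q₁₁⁻¹, …, w_s Q_ss⁻¹). -/
noncomputable def Dblk {s : ℕ} (r : Fin s → ℕ)
    (Q : Matrix ((i : Fin s) × Fin (r i)) ((i : Fin s) × Fin (r i)) ℝ)
    (w : Fin s → ℝ) :
    Matrix ((i : Fin s) × Fin (r i)) ((i : Fin s) × Fin (r i)) ℝ :=
  fun a b =>
    if h : a.1 = b.1 then
      w a.1 * (Matrix.of fun x y : Fin (r a.1) => Q ⟨a.1, x⟩ ⟨a.1, y⟩)⁻¹ a.2 (h.symm ▸ b.2)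
    else 0

/-! Scaling a nonnegative vector `v` by `(g v + ∑ v)⁻¹` balances the two terms of the extended
objective `min (g v) (1 - ∑ v)`, where `g = PG` is positively homogeneous. Hence every
direction `v` yields the value `g v / (g v + ∑ v)`, which the maximum `f(w*)` dominates.
Applied to `v = w*` this forces `g w* ≤ 1 - ∑ w*`, so `f(w*) = g w*`; applied to a
probability vector `p` it gives `∑ w* · g p ≤ g w*`, i.e. `g p ≤ g (w* / ∑ w*)`. -/

open Pointwise

lemma lamMin_smul {m : Type*} [Fintype m] [DecidableEq m]
    (M : Matrix m m ℝ) {c : ℝ} (hc : 0 < c) :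
    lamMin (c • M) = c * lamMin M := by
  unfold lamMin
  rw [show c • M = (Units.mk0 c hc.ne') • M from rfl, spectrum.unit_smul_eq_smul,
    show (Units.mk0 c hc.ne') • spectrum ℝ M = c • spectrum ℝ M from rfl,
    Real.sInf_smul_of_nonneg hc.le, smul_eq_mul]

lemma Dblk_smul {s : ℕ} (r : Fin s → ℕ)
    (Q : Matrix ((i : Fin s) × Fin (r i)) ((i : Fin s) × Fin (r i)) ℝ)
    (c : ℝ) (w : Fin s → ℝ) :
    Dblk r Q (c • w) = c • Dblk r Q w := by
  funext a b
  simp only [Dblk, Pi.smul_apply, Matrix.smul_apply, smul_eq_mul]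
  split_ifs <;> ring

section PositivelyHomogeneous

open Finset

variable {ι : Type*}

def IsPosHomogeneous (g : (ι → ℝ) → ℝ) : Prop :=
  ∀ c : ℝ, 0 < c → ∀ w, g (c • w) = c * g w

lemma IsPosHomogeneous.map_zero {g : (ι → ℝ) → ℝ} (hg : IsPosHomogeneous g) : g 0 = 0 := by
  have h := hg 2 two_pos 0
  rw [smul_zero] at h
  linarith

variable [Fintype ι]

def subSimplex (ι : Type*) [Fintype ι] : Set (ι → ℝ) :=
  {w | (∀ i, 0 ≤ w i) ∧ ∑ i, w i ≤ 1}

def extendedObjective (g : (ι → ℝ) → ℝ) (w : ι → ℝ) : ℝ :=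
  min (g w) (1 - ∑ i, w i)

lemma IsPosHomogeneous.extendedObjective_balanced {g : (ι → ℝ) → ℝ}
    (hg : IsPosHomogeneous g) {v : ι → ℝ} (hv : 0 < g v + ∑ i, v i) :
    extendedObjective g ((g v + ∑ i, v i)⁻¹ • v) = g v / (g v + ∑ i, v i) := by
  have hsum : 1 - ∑ i, ((g v + ∑ i, v i)⁻¹ • v) i = g v / (g v + ∑ i, v i) := by
    simp only [Pi.smul_apply, smul_eq_mul, ← mul_sum]
    field_simp
    ring
  rw [extendedObjective, hsum, hg _ (inv_pos.mpr hv), inv_mul_eq_div, min_self]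

variable {g : (ι → ℝ) → ℝ} {wstar : ι → ℝ}

lemma IsPosHomogeneous.div_add_sum_le_of_isMaxOn (hg : IsPosHomogeneous g)
    (hmax : IsMaxOn (extendedObjective g) (subSimplex ι) wstar)
    {v : ι → ℝ} (hv : ∀ i, 0 ≤ v i) (hgv : 0 ≤ g v) (hpos : 0 < g v + ∑ i, v i) :
    g v / (g v + ∑ i, v i) ≤ extendedObjective g wstar := by
  rw [← hg.extendedObjective_balanced hpos]
  refine hmax ⟨fun i => mul_nonneg (inv_pos.mpr hpos).le (hv i), ?_⟩
  simp only [Pi.smul_apply, smul_eq_mul, ← mul_sum]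
  rw [inv_mul_le_one₀ hpos]
  linarith

lemma IsPosHomogeneous.apply_nonneg_of_isMaxOn (hg : IsPosHomogeneous g)
    (hmax : IsMaxOn (extendedObjective g) (subSimplex ι) wstar) :
    0 ≤ g wstar := by
  have h0 : extendedObjective g 0 ≤ extendedObjective g wstar :=
    hmax ⟨fun _ => le_rfl, by simp⟩
  rw [extendedObjective, hg.map_zero] at h0
  simp only [Pi.zero_apply, sum_const_zero, sub_zero, zero_le_one, min_eq_left] at h0
  exact h0.trans (min_le_left _ _)

lemma IsPosHomogeneous.le_one_sub_sum_of_isMaxOn (hg : IsPosHomogeneous g)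
    (hmax : IsMaxOn (extendedObjective g) (subSimplex ι) wstar)
    (hws : ∀ i, 0 ≤ wstar i) (hk : 0 < ∑ i, wstar i) :
    g wstar ≤ 1 - ∑ i, wstar i := by
  have hL := hg.apply_nonneg_of_isMaxOn hmax
  have hpos : 0 < g wstar + ∑ i, wstar i := by positivity
  have h := (hg.div_add_sum_le_of_isMaxOn hmax hws hL hpos).trans (min_le_right _ _)
  rw [div_le_iff₀ hpos] at h
  nlinarith

lemma IsPosHomogeneous.apply_le_apply_normalize_of_isMaxOn (hg : IsPosHomogeneous g)
    (hmax : IsMaxOn (extendedObjective g) (subSimplex ι) wstar)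
    (hws : ∀ i, 0 ≤ wstar i) (hk : 0 < ∑ i, wstar i)
    {p : ι → ℝ} (hp : ∀ i, 0 ≤ p i) (hp1 : ∑ i, p i = 1) :
    g p ≤ g ((∑ i, wstar i)⁻¹ • wstar) := by
  have hL := hg.apply_nonneg_of_isMaxOn hmax
  have hLk := hg.le_one_sub_sum_of_isMaxOn hmax hws hk
  rw [hg _ (inv_pos.mpr hk), inv_mul_eq_div, le_div_iff₀ hk]
  rcases le_total (g p) 0 with hμ | hμ
  · nlinarith
  · have h := hg.div_add_sum_le_of_isMaxOn hmax hp hμ (by linarith)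
    rw [hp1, extendedObjective, min_eq_left hLk, div_le_iff₀ (by linarith)] at h
    nlinarith

end PositivelyHomogeneous

theorem extended_pseudoOptimal_points_general {s : ℕ} (r : Fin s → ℕ)
    (Q K : Matrix ((i : Fin s) × Fin (r i)) ((i : Fin s) × Fin (r i)) ℝ)
    (wstar : Fin s → ℝ)
    (hws : (∀ i, 0 ≤ wstar i) ∧ ∑ i, wstar i ≤ 1)
    (hmax : ∀ w : Fin s → ℝ, (∀ i, 0 ≤ w i) → (∑ i, w i ≤ 1) →
      min (lamMin (K * Dblk r Q w * K)) (1 - ∑ i, w i)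
        ≤ min (lamMin (K * Dblk r Q wstar * K)) (1 - ∑ i, wstar i))
    (hkpos : 0 < ∑ i, wstar i) :
    (∀ p : Fin s → ℝ, (∀ i, 0 < p i) → (∑ i, p i = 1) →
      lamMin (K * Dblk r Q p * K)
        ≤ lamMin (K * Dblk r Q (fun i => wstar i / ∑ j, wstar j) * K)) ∧
    lamMin (K * Dblk r Q (fun i => wstar i / ∑ j, wstar j) * K)
      = min (lamMin (K * Dblk r Q wstar * K)) (1 - ∑ i, wstar i)
        / ∑ i, wstar i := by
  set g : (Fin s → ℝ) → ℝ := fun w => lamMin (K * Dblk r Q w * K)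
  have hg : IsPosHomogeneous g := fun c hc w => by
    simp only [g, Dblk_smul, Matrix.mul_smul, Matrix.smul_mul, lamMin_smul _ hc]
  have hmax' : IsMaxOn (extendedObjective g) (subSimplex (Fin s)) wstar :=
    fun w hw => hmax w hw.1 hw.2
  have hnormalize : (fun i => wstar i / ∑ j, wstar j) = (∑ j, wstar j)⁻¹ • wstar := by
    funext i
    simp [div_eq_inv_mul]
  rw [hnormalize]
  refine ⟨fun p hp hp1 =>
    hg.apply_le_apply_normalize_of_isMaxOn hmax' hws.1 hkpos (fun i => (hp i).le) hp1, ?_⟩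
  rw [min_eq_left (hg.le_one_sub_sum_of_isMaxOn hmax' hws.1 hkpos)]
  exact (hg _ (inv_pos.mpr hkpos) wstar).trans (inv_mul_eq_div _ _)

/-- If w* maximizes f(w) = min{λ_min(√Q D_w √Q), 1 − Σᵢ wᵢ} over the simplex
Δ_s = {w : wᵢ ≥ 0, Σ wᵢ ≤ 1}, and k* = Σᵢ wᵢ* > 0, then p* = w*/k* maximizes
PG(p) = λ_min(√Q D_p √Q) over probability vectors, and PG(p*) = f(w*)/k*. -/
theorem extended_pseudoOptimal_points {s : ℕ} (r : Fin s → ℕ)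
    (Q K : Matrix ((i : Fin s) × Fin (r i)) ((i : Fin s) × Fin (r i)) ℝ)
    (hQ : Q.PosDef) (hK : K.PosSemidef) (hKQ : K * K = Q)
    (wstar : Fin s → ℝ)
    (hws : (∀ i, 0 ≤ wstar i) ∧ ∑ i, wstar i ≤ 1)
    (hmax : ∀ w : Fin s → ℝ, (∀ i, 0 ≤ w i) → (∑ i, w i ≤ 1) →
      min (lamMin (K * Dblk r Q w * K)) (1 - ∑ i, w i)
        ≤ min (lamMin (K * Dblk r Q wstar * K)) (1 - ∑ i, wstar i))
    (hkpos : 0 < ∑ i, wstar i) :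
    (∀ p : Fin s → ℝ, (∀ i, 0 < p i) → (∑ i, p i = 1) →
      lamMin (K * Dblk r Q p * K)
        ≤ lamMin (K * Dblk r Q (fun i => wstar i / ∑ j, wstar j) * K)) ∧
    lamMin (K * Dblk r Q (fun i => wstar i / ∑ j, wstar j) * K)
      = min (lamMin (K * Dblk r Q wstar * K)) (1 - ∑ i, wstar i)
        / ∑ i, wstar i :=
  extended_pseudoOptimal_points_general r Q K wstar hws hmax hkpos
end
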